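/- Maximal nested sets on the diagram A_{n-1} are in bijection with complete bracketings of the non-associative monomial x_1 x_2 ... x_n; in particular every maximal nested set on A_{n-1} has exactly n-1 elements besides the empty diagram. -/

import Mathlib

/-- Orthogonality of subdiagrams. -/
def SimpleGraph.Orthogonal {V : Type*} (G : SimpleGraph V) (B1 B2 : Set V) : Prop :=
  Disjoint B1 B2 ∧ ∀ i ∈ B1, ∀ j ∈ B2, ¬ G.Adj i j

/-- Compatibility of subdiagrams: one contains the other, or they are orthogonal. -/
def SimpleGraph.Compatible {V : Type*} (G : SimpleGraph V) (B1 B2 : Set V) : Prop :=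
  B1 ⊆ B2 ∨ B2 ⊆ B1 ∨ G.Orthogonal B1 B2

/-- The path graph on `ℕ`; the diagram `A_{n-1}` is its restriction to `{1, ..., n-1}`. -/
def pathGraph : SimpleGraph ℕ := SimpleGraph.fromRel (fun a b => b = a + 1)

/-- A nested set on the (connected) diagram `A_{n-1}` with vertex set `Icc 1 (n-1)`:
a collection of pairwise compatible connected subdiagrams, containing the empty
subdiagram and the full diagram (its unique connected component). -/
def IsNestedSetA (n : ℕ) (H : Set (Set ℕ)) : Prop :=
  (∀ B ∈ H, B ⊆ Set.Icc 1 (n - 1)) ∧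
  (∀ B ∈ H, B.Nonempty → (pathGraph.induce B).Connected) ∧
  (∀ B1 ∈ H, ∀ B2 ∈ H, pathGraph.Compatible B1 B2) ∧
  (∅ : Set ℕ) ∈ H ∧ Set.Icc 1 (n - 1) ∈ H

/-- A maximal nested set on `A_{n-1}`. -/
def IsMaxNestedSetA (n : ℕ) (H : Set (Set ℕ)) : Prop :=
  IsNestedSetA n H ∧ ∀ H', IsNestedSetA n H' → H ⊆ H' → H' = H

/-! A nonempty connected subdiagram of `A_{n-1}` is an interval, and two intervals are
compatible iff they are nested or separated by at least one vertex. In a maximal family of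
intervals filling a window `[a, b)`, the longest proper member starting at `a` (possibly empty)
is `[a, g)` for a vertex `g` lying in no proper member, and the proper members split into
maximal families on `[a, g)` and `[g + 1, b)`. This is the outer product
`(x_a ⋯ x_g)(x_{g+1} ⋯ x_b)` of a bracketing, so recursing on both sides identifies maximal
nested sets with binary trees, one interval for each internal node. -/

open Set

namespace SimpleGraph

variable {V : Type*} {G : SimpleGraph V} {B₁ B₂ C₁ C₂ : Set V}

theorem Orthogonal.symm (h : G.Orthogonal B₁ B₂) : G.Orthogonal B₂ B₁ :=
  ⟨h.1.symm, fun i hi j hj hij => h.2 j hj i hi hij.symm⟩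

theorem Orthogonal.mono (h : G.Orthogonal C₁ C₂) (h₁ : B₁ ⊆ C₁) (h₂ : B₂ ⊆ C₂) :
    G.Orthogonal B₁ B₂ :=
  ⟨h.1.mono h₁ h₂, fun i hi j hj => h.2 i (h₁ hi) j (h₂ hj)⟩

theorem Compatible.symm (h : G.Compatible B₁ B₂) : G.Compatible B₂ B₁ := by
  rcases h with h | h | h
  exacts [Or.inr (Or.inl h), Or.inl h, Or.inr (Or.inr h.symm)]

theorem compatible_empty_left (B : Set V) : G.Compatible ∅ B := Or.inl (empty_subset B)

end SimpleGraph

theorem pathGraph_adj {p q : ℕ} : pathGraph.Adj p q ↔ q = p + 1 ∨ p = q + 1 := by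
  simp only [pathGraph, SimpleGraph.fromRel_adj]
  omega

theorem pathGraph_orthogonal_of_add_one_lt {B₁ B₂ : Set ℕ}
    (h : ∀ x ∈ B₁, ∀ y ∈ B₂, x + 1 < y) :
    pathGraph.Orthogonal B₁ B₂ :=
  ⟨disjoint_left.2 fun x h₁ h₂ => by have := h x h₁ x h₂; omega,
    fun x hx y hy hxy => by have := h x hx y hy; rw [pathGraph_adj] at hxy; omega⟩

theorem pathGraph_orthogonal_Ico_iff {i j k l : ℕ} (hij : i < j) (hkl : k < l) :
    pathGraph.Orthogonal (Ico i j) (Ico k l) ↔ j < k ∨ l < i := by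
  constructor
  · rintro ⟨hdisj, hadj⟩
    by_contra! h
    rcases eq_or_lt_of_le h.1 with hjk | hjk
    · exact hadj (j - 1) ⟨by omega, by omega⟩ k ⟨le_rfl, hkl⟩ (pathGraph_adj.2 (by omega))
    rcases eq_or_lt_of_le h.2 with hli | hli
    · exact hadj i ⟨le_rfl, hij⟩ (l - 1) ⟨by omega, by omega⟩ (pathGraph_adj.2 (by omega))
    exact disjoint_left.1 hdisj (show max i k ∈ Ico i j from ⟨by omega, by omega⟩)
      ⟨by omega, by omega⟩
  · rintro (h | h)
    · exact pathGraph_orthogonal_of_add_one_lt fun x hx y hy => by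
        simp only [mem_Ico] at hx hy; omega
    · exact (pathGraph_orthogonal_of_add_one_lt fun x hx y hy => by
        simp only [mem_Ico] at hx hy; omega).symm

theorem pathGraph_compatible_Ico_iff {i j k l : ℕ} (hij : i < j) (hkl : k < l) :
    pathGraph.Compatible (Ico i j) (Ico k l) ↔
      (k ≤ i ∧ j ≤ l) ∨ (i ≤ k ∧ l ≤ j) ∨ j < k ∨ l < i := by
  rw [SimpleGraph.Compatible, Ico_subset_Ico_iff hij, Ico_subset_Ico_iff hkl,
    pathGraph_orthogonal_Ico_iff hij hkl]

theorem pathGraph_induce_Ico_connected {i j : ℕ} (hij : i < j) :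
    (pathGraph.induce (Ico i j)).Connected := by
  have hi : i ∈ Ico i j := ⟨le_rfl, hij⟩
  have reach : ∀ x, i ≤ x → ∀ hx : x ∈ Ico i j,
      (pathGraph.induce (Ico i j)).Reachable ⟨i, hi⟩ ⟨x, hx⟩ := by
    intro x hix
    induction x, hix using Nat.le_induction with
    | base => intro _; rfl
    | succ y hiy ih =>
      intro hy
      refine (ih ⟨hiy, by have := hy.2; omega⟩).trans (SimpleGraph.Adj.reachable ?_)
      exact pathGraph_adj.2 (Or.inl rfl)
  have : Nonempty (Ico i j) := ⟨⟨i, hi⟩⟩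
  exact ⟨fun u v => (reach u u.2.1 u.2).symm.trans (reach v v.2.1 v.2)⟩

/-- A walk in `B` that crosses a point `k` has to step onto `k`. -/
theorem ordConnected_of_pathGraph_induce_connected {B : Set ℕ}
    (hB : (pathGraph.induce B).Connected) : B.OrdConnected := by
  refine ⟨fun u hu v hv k hk => ?_⟩
  by_contra hkB
  obtain ⟨p⟩ := hB.preconnected ⟨u, hu⟩ ⟨v, hv⟩
  obtain ⟨d, -, hd₁, hd₂⟩ := p.exists_boundary_dart {x | (x : ℕ) < k}
    (show u < k from lt_of_le_of_ne hk.1 fun h => hkB (h ▸ hu))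
    (show ¬ v < k by have := hk.2; omega)
  have hadj : pathGraph.Adj d.fst d.snd := d.adj
  rw [pathGraph_adj] at hadj
  change (d.fst : ℕ) < k at hd₁
  change ¬ (d.snd : ℕ) < k at hd₂
  exact hkB (show (d.snd : ℕ) = k by omega ▸ d.snd.2)

theorem exists_eq_Ico_of_pathGraph_induce_connected {B : Set ℕ} (hbdd : BddAbove B)
    (hne : B.Nonempty) (hB : (pathGraph.induce B).Connected) :
    ∃ i j, i < j ∧ B = Ico i j := by
  have hinf : sInf B ∈ B := Nat.sInf_mem hne
  have hsup : sSup B ∈ B := Nat.sSup_mem hne hbdd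
  refine ⟨sInf B, sSup B + 1, Nat.lt_succ_of_le (le_csSup hbdd hinf), ?_⟩
  rw [Ico_add_one_right_eq_Icc]
  exact Subset.antisymm (fun x hx => ⟨Nat.sInf_le hx, le_csSup hbdd hx⟩)
    ((ordConnected_of_pathGraph_induce_connected hB).out hinf hsup)

structure IsMaxIntervalFamily (W : Set ℕ) (F : Set (Set ℕ)) : Prop where
  exists_eq_Ico : ∀ B ∈ F, ∃ i j, i < j ∧ B = Ico i j
  subset : ∀ B ∈ F, B ⊆ W
  compatible : ∀ B₁ ∈ F, ∀ B₂ ∈ F, pathGraph.Compatible B₁ B₂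
  mem_of_compatible : ∀ i j, i < j → Ico i j ⊆ W →
    (∀ C ∈ F, pathGraph.Compatible (Ico i j) C) → Ico i j ∈ F

namespace IsMaxIntervalFamily

variable {W : Set ℕ} {F F₁ F₂ : Set (Set ℕ)} {a g b : ℕ}

theorem of_Ico_self (a : ℕ) : IsMaxIntervalFamily (Ico a a) ∅ where
  exists_eq_Ico _ h := h.elim
  subset _ h := h.elim
  compatible _ h := h.elim
  mem_of_compatible i j hij hI _ := absurd (hI ⟨le_rfl, hij⟩) (by simp)

theorem nonempty (hF : IsMaxIntervalFamily W F) {B : Set ℕ} (hB : B ∈ F) : B.Nonempty := by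
  obtain ⟨i, j, hij, rfl⟩ := hF.exists_eq_Ico B hB
  exact nonempty_Ico.2 hij

theorem eq_empty_of_window_eq_empty (hF : IsMaxIntervalFamily W F) (hW : W = ∅) : F = ∅ :=
  eq_empty_of_forall_notMem fun B hB =>
    (hF.nonempty hB).ne_empty (subset_empty_iff.1 (hW ▸ hF.subset B hB))

theorem window_mem (hF : IsMaxIntervalFamily (Ico a b) F) (hab : a < b) : Ico a b ∈ F :=
  hF.mem_of_compatible a b hab subset_rfl fun C hC => Or.inr (Or.inl (hF.subset C hC))

/-- Compatibility of `Ico i j` with the window, spelled out so as to cover an empty window,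
which is not a member. -/
theorem compatible_window (hF : IsMaxIntervalFamily (Ico a b) F) {i j : ℕ} (hij : i < j)
    (hc : ∀ C ∈ F, pathGraph.Compatible (Ico i j) C) :
    (a ≤ i ∧ j ≤ b) ∨ (i ≤ a ∧ b ≤ j) ∨ j < a ∨ b < i := by
  rcases lt_or_ge a b with hab | hab
  · exact (pathGraph_compatible_Ico_iff hij hab).1 (hc _ (hF.window_mem hab))
  · omega

theorem restrict (hF : IsMaxIntervalFamily W F) {W' : Set ℕ} (hW' : W' ⊆ W)
    (hc : ∀ B ∈ F, pathGraph.Compatible W' B) :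
    IsMaxIntervalFamily W' {B ∈ F | B ⊆ W'} where
  exists_eq_Ico B hB := hF.exists_eq_Ico B hB.1
  subset B hB := hB.2
  compatible B₁ hB₁ B₂ hB₂ := hF.compatible B₁ hB₁.1 B₂ hB₂.1
  mem_of_compatible i j hij hI hcI := by
    refine ⟨hF.mem_of_compatible i j hij (hI.trans hW') fun C hC => ?_, hI⟩
    by_cases hCW' : C ⊆ W'
    · exact hcI C ⟨hC, hCW'⟩
    rcases hc C hC with h | h | h
    · exact Or.inl (hI.trans h)
    · exact absurd h hCW'
    · exact Or.inr (Or.inr (h.mono hI subset_rfl))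

/-- `g` is taken with `Ico a g` the longest proper member starting at `a` (`g = a` if there is
none); compatibility with it keeps every other proper member off `g`. -/
theorem exists_gap (hF : IsMaxIntervalFamily (Ico a b) F) (hab : a < b) :
    ∃ g, a ≤ g ∧ g < b ∧
      ∀ B ∈ F, B = Ico a b ∨ B ⊆ Ico a g ∨ B ⊆ Ico (g + 1) b := by
  classical
  let P : ℕ → Prop := fun g => g = a ∨ Ico a g ∈ F
  let g := Nat.findGreatest P (b - 1)
  have hag : a ≤ g := Nat.le_findGreatest (by omega) (Or.inl rfl)
  have hgb : g < b := by have := Nat.findGreatest_le (P := P) (b - 1); omega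
  refine ⟨g, hag, hgb, fun B hB => ?_⟩
  obtain ⟨i, j, hij, rfl⟩ := hF.exists_eq_Ico B hB
  have hiab := (Ico_subset_Ico_iff hij).1 (hF.subset _ hB)
  rw [Ico_subset_Ico_iff hij, Ico_subset_Ico_iff hij, Ico_eq_Ico_iff (Or.inl hij)]
  by_cases hia : i = a
  · subst hia
    by_cases hjb : j = b
    · exact Or.inl ⟨rfl, hjb⟩
    have : j ≤ g := Nat.le_findGreatest (by omega) (Or.inr hB)
    omega
  by_cases hga : g = a
  · omega
  have hgF : Ico a g ∈ F :=
    (Nat.findGreatest_spec (P := P) (m := a) (by omega) (Or.inl rfl)).resolve_left hga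
  have := (pathGraph_compatible_Ico_iff hij (by omega)).1 (hF.compatible _ hB _ hgF)
  omega

theorem exists_split (hF : IsMaxIntervalFamily (Ico a b) F) (hab : a < b) :
    ∃ g, a ≤ g ∧ g < b ∧
      IsMaxIntervalFamily (Ico a g) {B ∈ F | B ⊆ Ico a g} ∧
      IsMaxIntervalFamily (Ico (g + 1) b) {B ∈ F | B ⊆ Ico (g + 1) b} ∧
      F = insert (Ico a b) ({B ∈ F | B ⊆ Ico a g} ∪ {B ∈ F | B ⊆ Ico (g + 1) b}) := by
  obtain ⟨g, hag, hgb, hsplit⟩ := hF.exists_gap hab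
  have hsep : pathGraph.Orthogonal (Ico a g) (Ico (g + 1) b) :=
    pathGraph_orthogonal_of_add_one_lt fun x hx y hy => by
      simp only [mem_Ico] at hx hy; omega
  refine ⟨g, hag, hgb, hF.restrict (Ico_subset_Ico_right hgb.le) fun B hB => ?_,
    hF.restrict (Ico_subset_Ico_left (by omega)) fun B hB => ?_, ?_⟩
  · rcases hsplit B hB with rfl | h | h
    exacts [Or.inl (Ico_subset_Ico_right hgb.le), Or.inr (Or.inl h),
      Or.inr (Or.inr (hsep.mono subset_rfl h))]
  · rcases hsplit B hB with rfl | h | h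
    exacts [Or.inl (Ico_subset_Ico_left (by omega)), Or.inr (Or.inr (hsep.symm.mono subset_rfl h)),
      Or.inr (Or.inl h)]
  · ext B
    refine ⟨fun hB => ?_, ?_⟩
    · rcases hsplit B hB with rfl | h | h
      exacts [mem_insert _ _, Or.inr (Or.inl ⟨hB, h⟩), Or.inr (Or.inr ⟨hB, h⟩)]
    · rintro (rfl | ⟨hB, -⟩ | ⟨hB, -⟩)
      exacts [hF.window_mem hab, hB, hB]

theorem insert_union (h₁ : IsMaxIntervalFamily (Ico a g) F₁)
    (h₂ : IsMaxIntervalFamily (Ico (g + 1) b) F₂) (hag : a ≤ g) (hgb : g < b) :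
    IsMaxIntervalFamily (Ico a b) (insert (Ico a b) (F₁ ∪ F₂)) := by
  have sub₁ : ∀ B ∈ F₁, B ⊆ Ico a b := fun B hB =>
    (h₁.subset B hB).trans (Ico_subset_Ico_right hgb.le)
  have sub₂ : ∀ B ∈ F₂, B ⊆ Ico a b := fun B hB =>
    (h₂.subset B hB).trans (Ico_subset_Ico_left (by omega))
  have orth : ∀ B₁ ∈ F₁, ∀ B₂ ∈ F₂, pathGraph.Orthogonal B₁ B₂ :=
    fun B₁ hB₁ B₂ hB₂ =>
    pathGraph_orthogonal_of_add_one_lt fun x hx y hy => by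
      have := h₁.subset B₁ hB₁ hx; have := h₂.subset B₂ hB₂ hy
      simp only [mem_Ico] at *; omega
  refine ⟨?_, ?_, ?_, fun i j hij hI hc => ?_⟩
  · rintro B (rfl | hB | hB)
    exacts [⟨a, b, by omega, rfl⟩, h₁.exists_eq_Ico B hB, h₂.exists_eq_Ico B hB]
  · rintro B (rfl | hB | hB)
    exacts [subset_rfl, sub₁ B hB, sub₂ B hB]
  · rintro B₁ (rfl | hB₁ | hB₁) B₂ (rfl | hB₂ | hB₂)
    · exact Or.inl subset_rfl
    · exact Or.inr (Or.inl (sub₁ B₂ hB₂))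
    · exact Or.inr (Or.inl (sub₂ B₂ hB₂))
    · exact Or.inl (sub₁ B₁ hB₁)
    · exact h₁.compatible B₁ hB₁ B₂ hB₂
    · exact Or.inr (Or.inr (orth B₁ hB₁ B₂ hB₂))
    · exact Or.inl (sub₂ B₁ hB₁)
    · exact Or.inr (Or.inr (orth B₂ hB₂ B₁ hB₁).symm)
    · exact h₂.compatible B₁ hB₁ B₂ hB₂
  have hc₁ := h₁.compatible_window hij fun C hC => hc C (Or.inr (Or.inl hC))
  have hc₂ := h₂.compatible_window hij fun C hC => hc C (Or.inr (Or.inr hC))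
  rw [Ico_subset_Ico_iff hij] at hI
  by_cases htop : i = a ∧ j = b
  · rw [htop.1, htop.2]
    exact mem_insert _ _
  by_cases hleft : j ≤ g
  · exact Or.inr (Or.inl (h₁.mem_of_compatible i j hij (Ico_subset_Ico hI.1 hleft)
      fun C hC => hc C (Or.inr (Or.inl hC))))
  · exact Or.inr (Or.inr (h₂.mem_of_compatible i j hij (Ico_subset_Ico (by omega) hI.2)
      fun C hC => hc C (Or.inr (Or.inr hC))))

theorem le_of_Ico_mem_insert_union (h₁ : IsMaxIntervalFamily (Ico a g) F₁)
    (h₂ : IsMaxIntervalFamily (Ico (g + 1) b) F₂) (hag : a ≤ g) {q : ℕ} (haq : a < q)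
    (hqb : q < b) (hq : Ico a q ∈ insert (Ico a b) (F₁ ∪ F₂)) : q ≤ g := by
  rcases hq with hq | hq | hq
  · rw [Ico_eq_Ico_iff (Or.inl haq)] at hq
    omega
  · exact ((Ico_subset_Ico_iff haq).1 (h₁.subset _ hq)).2
  · have := ((Ico_subset_Ico_iff haq).1 (h₂.subset _ hq)).1
    omega

theorem sep_insert_union_left (h₁ : IsMaxIntervalFamily (Ico a g) F₁)
    (h₂ : IsMaxIntervalFamily (Ico (g + 1) b) F₂) (hag : a ≤ g) (hgb : g < b) :
    {B ∈ insert (Ico a b) (F₁ ∪ F₂) | B ⊆ Ico a g} = F₁ := by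
  ext B
  refine ⟨fun ⟨hB, hBg⟩ => ?_, fun hB => ⟨Or.inr (Or.inl hB), h₁.subset B hB⟩⟩
  rcases hB with rfl | hB | hB
  · have := (Ico_subset_Ico_iff (by omega)).1 hBg
    omega
  · exact hB
  · obtain ⟨x, hx⟩ := h₂.nonempty hB
    have := hBg hx; have := h₂.subset B hB hx
    simp only [mem_Ico] at *; omega

theorem sep_insert_union_right (h₁ : IsMaxIntervalFamily (Ico a g) F₁)
    (h₂ : IsMaxIntervalFamily (Ico (g + 1) b) F₂) (hag : a ≤ g) (hgb : g < b) :
    {B ∈ insert (Ico a b) (F₁ ∪ F₂) | B ⊆ Ico (g + 1) b} = F₂ := by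
  ext B
  refine ⟨fun ⟨hB, hBg⟩ => ?_, fun hB => ⟨Or.inr (Or.inr hB), h₂.subset B hB⟩⟩
  rcases hB with rfl | hB | hB
  · have := (Ico_subset_Ico_iff (by omega)).1 hBg
    omega
  · obtain ⟨x, hx⟩ := h₁.nonempty hB
    have := hBg hx; have := h₁.subset B hB hx
    simp only [mem_Ico] at *; omega
  · exact hB

/-- The gap `g` is recovered from the family as the end of its longest proper member starting
at `a`, so the decomposition of `exists_split` is unique. -/
theorem eq_of_insert_union_eq {g' : ℕ} {F₁' F₂' : Set (Set ℕ)}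
    (h₁ : IsMaxIntervalFamily (Ico a g) F₁) (h₂ : IsMaxIntervalFamily (Ico (g + 1) b) F₂)
    (h₁' : IsMaxIntervalFamily (Ico a g') F₁')
    (h₂' : IsMaxIntervalFamily (Ico (g' + 1) b) F₂')
    (hag : a ≤ g) (hgb : g < b) (hag' : a ≤ g') (hgb' : g' < b)
    (h : insert (Ico a b) (F₁ ∪ F₂) = insert (Ico a b) (F₁' ∪ F₂')) :
    g = g' ∧ F₁ = F₁' ∧ F₂ = F₂' := by
  have hg : g = g' := by
    by_contra hne
    rcases lt_or_gt_of_ne hne with hlt | hlt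
    · have := h₁.le_of_Ico_mem_insert_union h₂ hag (by omega) hgb'
        (h ▸ Or.inr (Or.inl (h₁'.window_mem (by omega))))
      omega
    · have := h₁'.le_of_Ico_mem_insert_union h₂' hag' (by omega) hgb
        (h ▸ Or.inr (Or.inl (h₁.window_mem (by omega))))
      omega
  subst hg
  refine ⟨rfl, ?_, ?_⟩
  · rw [← h₁.sep_insert_union_left h₂ hag hgb, h, h₁'.sep_insert_union_left h₂' hag hgb]
  · rw [← h₁.sep_insert_union_right h₂ hag hgb, h,
      h₁'.sep_insert_union_right h₂' hag hgb]

theorem encard_insert_union (h₁ : IsMaxIntervalFamily (Ico a g) F₁)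
    (h₂ : IsMaxIntervalFamily (Ico (g + 1) b) F₂) (hag : a ≤ g) (hgb : g < b) :
    (insert (Ico a b) (F₁ ∪ F₂)).encard = F₁.encard + F₂.encard + 1 := by
  have hdisj : Disjoint F₁ F₂ := disjoint_left.2 fun B hB₁ hB₂ => by
    obtain ⟨x, hx⟩ := h₁.nonempty hB₁
    have := h₁.subset B hB₁ hx; have := h₂.subset B hB₂ hx
    simp only [mem_Ico] at *; omega
  have hnotMem : Ico a b ∉ F₁ ∪ F₂ := by
    rintro (h | h)
    · have := (Ico_subset_Ico_iff (by omega)).1 (h₁.subset _ h); omega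
    · have := (Ico_subset_Ico_iff (by omega)).1 (h₂.subset _ h); omega
  rw [encard_insert_of_notMem hnotMem, encard_union_eq hdisj]

end IsMaxIntervalFamily

/-- The brackets of the complete bracketing `t` of `x_a ⋯ x_{a + t.numNodes}`: the bracket
around `x_i ⋯ x_j` is the interval `Ico i j`, and the left factor of the outer bracket ends
at `x_{a + l.numNodes}`. -/
def bracketIntervals : BinaryTree Unit → ℕ → Set (Set ℕ)
  | .nil, _ => ∅
  | .node _ l r, a =>
    insert (Ico a (a + l.numNodes + 1 + r.numNodes))
      (bracketIntervals l a ∪ bracketIntervals r (a + l.numNodes + 1))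

theorem add_numNodes_node (a : ℕ) (x : Unit) (l r : BinaryTree Unit) :
    a + (BinaryTree.node x l r).numNodes = a + l.numNodes + 1 + r.numNodes := by
  simp only [BinaryTree.numNodes]
  omega

theorem isMaxIntervalFamily_bracketIntervals (t : BinaryTree Unit) (a : ℕ) :
    IsMaxIntervalFamily (Ico a (a + t.numNodes)) (bracketIntervals t a) := by
  induction t generalizing a with
  | nil => exact IsMaxIntervalFamily.of_Ico_self a
  | node x l r ihl ihr =>
    rw [add_numNodes_node]
    exact (ihl a).insert_union (ihr _) (by omega) (by omega)

theorem exists_bracketIntervals_eq {m a : ℕ} {F : Set (Set ℕ)}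
    (hF : IsMaxIntervalFamily (Ico a (a + m)) F) :
    ∃ t : BinaryTree Unit, t.numNodes = m ∧ bracketIntervals t a = F := by
  induction m using Nat.strong_induction_on generalizing a F with
  | _ m ih =>
  rcases Nat.eq_zero_or_pos m with rfl | hm
  · exact ⟨.nil, rfl, (hF.eq_empty_of_window_eq_empty (by simp)).symm⟩
  obtain ⟨g, hag, hgb, h₁, h₂, hsplit⟩ := hF.exists_split (by omega)
  obtain ⟨l, hl, hlF⟩ := ih (g - a) (by omega) (a := a) (by rwa [Nat.add_sub_cancel' hag])
  obtain ⟨r, hr, hrF⟩ := ih (a + m - (g + 1)) (by omega) (a := g + 1)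
    (by rwa [Nat.add_sub_cancel' hgb])
  refine ⟨.node () l r, by simp only [BinaryTree.numNodes]; omega, ?_⟩
  have e₁ : a + l.numNodes + 1 = g + 1 := by omega
  have e₂ : a + l.numNodes + 1 + r.numNodes = a + m := by omega
  rw [bracketIntervals, e₂, e₁, hlF, hrF, ← hsplit]

theorem bracketIntervals_injective {t t' : BinaryTree Unit} {a : ℕ}
    (h : bracketIntervals t a = bracketIntervals t' a) : t = t' := by
  induction t generalizing t' a with
  | nil =>
    cases t' with
    | nil => rfl
    | node => exact absurd h.symm (insert_nonempty _ _).ne_empty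
  | node x l r ihl ihr =>
    cases t' with
    | nil => exact absurd h (insert_nonempty _ _).ne_empty
    | node x' l' r' =>
      have hmax := isMaxIntervalFamily_bracketIntervals (.node x l r) a
      have hmax' := isMaxIntervalFamily_bracketIntervals (.node x' l' r') a
      rw [add_numNodes_node] at hmax hmax'
      have hb : a + l'.numNodes + 1 + r'.numNodes = a + l.numNodes + 1 + r.numNodes := by
        have h₁ := hmax.subset _ (h ▸ mem_insert _ _ :
          Ico a (a + l'.numNodes + 1 + r'.numNodes) ∈ bracketIntervals (.node x l r) a)
        have h₂ := hmax'.subset _ (h ▸ mem_insert _ _ :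
          Ico a (a + l.numNodes + 1 + r.numNodes) ∈ bracketIntervals (.node x' l' r') a)
        rw [Ico_subset_Ico_iff (by omega)] at h₁ h₂
        omega
      have hr' := hb ▸ isMaxIntervalFamily_bracketIntervals r' (a + l'.numNodes + 1)
      rw [bracketIntervals, bracketIntervals, hb] at h
      obtain ⟨hg, hl, hr⟩ := (isMaxIntervalFamily_bracketIntervals l a).eq_of_insert_union_eq
        (isMaxIntervalFamily_bracketIntervals r _) (isMaxIntervalFamily_bracketIntervals l' a) hr'
        (by omega) (by omega) (by omega) (by omega) h
      rw [← hg] at hr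
      rw [ihl hl, ihr hr]

theorem encard_bracketIntervals (t : BinaryTree Unit) (a : ℕ) :
    (bracketIntervals t a).encard = t.numNodes := by
  induction t generalizing a with
  | nil => simp [bracketIntervals]
  | node x l r ihl ihr =>
    rw [bracketIntervals, ((isMaxIntervalFamily_bracketIntervals l a).encard_insert_union
      (isMaxIntervalFamily_bracketIntervals r _) (by omega) (by omega)), ihl, ihr]
    simp only [BinaryTree.numNodes]
    push_cast
    ring

theorem IsMaxIntervalFamily.ncard_eq {a m : ℕ} {F : Set (Set ℕ)}
    (hF : IsMaxIntervalFamily (Ico a (a + m)) F) : F.ncard = m := by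
  obtain ⟨t, rfl, rfl⟩ := exists_bracketIntervals_eq hF
  rw [ncard_def, encard_bracketIntervals, ENat.toNat_natCast]

noncomputable def bracketingsEquiv (a m : ℕ) :
    {t : BinaryTree Unit // t.numNodes = m} ≃
      {F : Set (Set ℕ) // IsMaxIntervalFamily (Ico a (a + m)) F} :=
  Equiv.ofBijective
    (fun t => ⟨bracketIntervals t.1 a, by
      simpa only [t.2] using isMaxIntervalFamily_bracketIntervals t.1 a⟩)
    ⟨fun _ _ h => Subtype.ext (bracketIntervals_injective (congrArg Subtype.val h)),
      fun F =>
        let ⟨t, ht, htF⟩ := exists_bracketIntervals_eq F.2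
        ⟨⟨t, ht⟩, Subtype.ext htF⟩⟩

theorem IsNestedSetA.exists_eq_Ico {n : ℕ} {H : Set (Set ℕ)} (hH : IsNestedSetA n H)
    {B : Set ℕ} (hB : B ∈ H) (hne : B.Nonempty) : ∃ i j, i < j ∧ B = Ico i j :=
  exists_eq_Ico_of_pathGraph_induce_connected ⟨n - 1, fun _ hx => (hH.1 B hB hx).2⟩ hne
    (hH.2.1 B hB hne)

theorem IsMaxNestedSetA.isMaxIntervalFamily {n : ℕ} {H : Set (Set ℕ)}
    (hH : IsMaxNestedSetA n H) : IsMaxIntervalFamily (Icc 1 (n - 1)) (H \ {∅}) where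
  exists_eq_Ico B hB := hH.1.exists_eq_Ico hB.1 (nonempty_iff_ne_empty.2 hB.2)
  subset B hB := hH.1.1 B hB.1
  compatible B₁ hB₁ B₂ hB₂ := hH.1.2.2.1 B₁ hB₁.1 B₂ hB₂.1
  mem_of_compatible i j hij hI hc := by
    obtain ⟨⟨hsub, hconn, hcomp, hempty, hfull⟩, hmax⟩ := hH
    have hcH : ∀ C ∈ H, pathGraph.Compatible (Ico i j) C := fun C hC => by
      by_cases hC₀ : C = ∅
      · exact (hC₀ ▸ SimpleGraph.compatible_empty_left _).symm
      · exact hc C ⟨hC, hC₀⟩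
    have hnested : IsNestedSetA n (insert (Ico i j) H) := by
      refine ⟨?_, ?_, ?_, mem_insert_of_mem _ hempty, mem_insert_of_mem _ hfull⟩
      · rintro B (rfl | hB)
        exacts [hI, hsub B hB]
      · rintro B (rfl | hB)
        exacts [fun _ => pathGraph_induce_Ico_connected hij, hconn B hB]
      · rintro B₁ (rfl | hB₁) B₂ (rfl | hB₂)
        exacts [Or.inl subset_rfl, hcH B₂ hB₂, (hcH B₁ hB₁).symm,
          hcomp B₁ hB₁ B₂ hB₂]
    exact ⟨hmax _ hnested (subset_insert _ _) ▸ mem_insert _ _, (nonempty_Ico.2 hij).ne_empty⟩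

theorem IsMaxIntervalFamily.isMaxNestedSetA_insert_empty {n : ℕ} {F : Set (Set ℕ)}
    (hF : IsMaxIntervalFamily (Icc 1 (n - 1)) F) : IsMaxNestedSetA n (insert ∅ F) := by
  have hnested : IsNestedSetA n (insert ∅ F) := by
    refine ⟨?_, ?_, ?_, mem_insert _ _, ?_⟩
    · rintro B (rfl | hB)
      exacts [empty_subset _, hF.subset B hB]
    · rintro B (rfl | hB) hne
      · exact absurd hne not_nonempty_empty
      · obtain ⟨i, j, hij, rfl⟩ := hF.exists_eq_Ico B hB
        exact pathGraph_induce_Ico_connected hij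
    · rintro B₁ (rfl | hB₁) B₂ (rfl | hB₂)
      exacts [SimpleGraph.compatible_empty_left _, SimpleGraph.compatible_empty_left _,
        (SimpleGraph.compatible_empty_left _).symm, hF.compatible B₁ hB₁ B₂ hB₂]
    · rw [← Ico_add_one_right_eq_Icc] at hF ⊢
      rcases Nat.lt_or_ge 1 (n - 1 + 1) with h | h
      · exact mem_insert_of_mem _ (hF.window_mem h)
      · rw [Ico_eq_empty (by omega)]
        exact mem_insert _ _
  refine ⟨hnested, fun H hH hsub => subset_antisymm (fun B hB => ?_) hsub⟩
  by_cases hB₀ : B = ∅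
  · exact hB₀ ▸ mem_insert _ _
  obtain ⟨i, j, hij, rfl⟩ := hH.exists_eq_Ico hB (nonempty_iff_ne_empty.2 hB₀)
  exact mem_insert_of_mem _ (hF.mem_of_compatible i j hij (hH.1 _ hB)
    fun C hC => hH.2.2.1 _ hB _ (hsub (mem_insert_of_mem _ hC)))

def maxNestedSetAEquiv (n : ℕ) :
    {H : Set (Set ℕ) // IsMaxNestedSetA n H} ≃
      {F : Set (Set ℕ) // IsMaxIntervalFamily (Icc 1 (n - 1)) F} where
  toFun H := ⟨H.1 \ {∅}, H.2.isMaxIntervalFamily⟩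
  invFun F := ⟨insert ∅ F.1, F.2.isMaxNestedSetA_insert_empty⟩
  left_inv H := Subtype.ext (insert_sdiff_singleton.trans (insert_eq_of_mem H.2.1.2.2.2.1))
  right_inv F := Subtype.ext (insert_sdiff_self_of_notMem fun h => (F.2.nonempty h).ne_empty rfl)

theorem maxNestedSetsA_equiv_bracketings_general (n : ℕ) :
    Nonempty ({H : Set (Set ℕ) // IsMaxNestedSetA n H} ≃
      {t : Tree Unit // t.numNodes = n - 1}) ∧
    (∀ H : Set (Set ℕ), IsMaxNestedSetA n H → (H \ {(∅ : Set ℕ)}).ncard = n - 1) := by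
  have hW : Icc 1 (n - 1) = Ico 1 (1 + (n - 1)) := by
    rw [add_comm, Ico_add_one_right_eq_Icc]
  exact ⟨⟨(maxNestedSetAEquiv n).trans <|
      (Equiv.subtypeEquivRight fun F => by rw [hW]).trans (bracketingsEquiv 1 (n - 1)).symm⟩,
    fun H hH => (hW ▸ hH.isMaxIntervalFamily).ncard_eq⟩

/-- Maximal nested sets on the diagram `A_{n-1}` are in bijection with complete
bracketings of the monomial `x_1 ⋯ x_n` (equivalently, planar binary trees with
`n` leaves, i.e. with `n-1` internal nodes); in particular every maximal nested set
on `A_{n-1}` has exactly `n-1` elements besides the empty diagram. -/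
theorem maxNestedSetsA_equiv_bracketings (n : ℕ) (hn : 2 ≤ n) :
    Nonempty ({H : Set (Set ℕ) // IsMaxNestedSetA n H} ≃
      {t : Tree Unit // t.numNodes = n - 1}) ∧
    (∀ H : Set (Set ℕ), IsMaxNestedSetA n H → (H \ {(∅ : Set ℕ)}).ncard = n - 1) :=
  maxNestedSetsA_equiv_bracketings_general n
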